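/- arXiv:1808.07249 — 4 statements merged into one kernel-verified Lean document; each statement's English description precedes it below -/
import Mathlib

section
/- Each column s_j of the Moore–Penrose pseudo-inverse D† of the incidence matrix of a connected weighted graph satisfies ‖s_j‖₂ ≤ √(2‖W‖_∞)/ρ(G), where ρ(G) is the second-smallest Laplacian eigenvalue. -/
/-!
Write `D` for the incidence matrix and `s` for the column of `D†` indexed by the edge `e`.
Since `DᵀD = L`, the Penrose equations give `L D† = Dᵀ`, so `L s` is the row `D_e`; and
`D† = Dᵀ (D†ᵀ D†)` puts `s` in the range of `Dᵀ`, which is orthogonal to the constants because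
every row of `D` sums to zero. The variational characterization of `ρ` and Cauchy–Schwarz give
`ρ ‖s‖² ≤ sᵀ L s = ⟨s, D_e⟩ ≤ ‖s‖ ‖D_e‖`, and `‖D_e‖² = 2 W_e ≤ 2 ‖W‖_∞`.
-/

open Matrix

/-- Oriented incidence matrix of a weighted graph on vertex set `V`:
rows are indexed by ordered pairs `(i,j)` with `i < j` (the chosen orientation),
with entry `√W_{ij}` at the head `i`, `−√W_{ij}` at the tail `j`, and `0` otherwise. -/
noncomputable def inc {V : Type*} [Fintype V] [DecidableEq V] [LinearOrder V]
    (W : Matrix V V ℝ) : Matrix (V × V) V ℝ :=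
  fun e k =>
    if e.1 < e.2 then
      (if k = e.1 then Real.sqrt (W e.1 e.2)
       else if k = e.2 then -Real.sqrt (W e.1 e.2) else 0)
    else 0

/-- Graph Laplacian `L = Λ − W`, where `Λ` is the diagonal matrix of weighted degrees. -/
noncomputable def lap {V : Type*} [Fintype V] [DecidableEq V]
    (W : Matrix V V ℝ) : Matrix V V ℝ :=
  Matrix.diagonal (fun i => ∑ j, W i j) - W

open Finset

lemma sum_sum_eq_two_nsmul_sum_sum_ite_lt {V R : Type*} [Fintype V] [LinearOrder V]
    [AddCommMonoid R] (t : V → V → R) (ht : ∀ a b, t a b = t b a)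
    (ht_diag : ∀ a, t a a = 0) :
    ∑ a, ∑ b, t a b = 2 • ∑ a, ∑ b, if a < b then t a b else 0 := by
  have hsplit : ∀ a b, t a b = (if a < b then t a b else 0) + (if b < a then t b a else 0) := by
    intro a b
    rcases lt_trichotomy a b with h | rfl | h
    · simp [h, h.not_gt]
    · simp [ht_diag]
    · simp [h, h.not_gt, ht a b]
  rw [sum_congr rfl fun a _ => sum_congr rfl fun b _ => hsplit a b]
  simp only [sum_add_distrib]
  rw [two_nsmul]
  congr 1
  exact sum_comm

section

variable {m n p α : Type*} [Fintype m] [Fintype n] [CommSemiring α]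

theorem Matrix.transpose_mul_mul_eq_transpose {A : Matrix m n α} {X : Matrix n m α}
    (h₁ : A * X * A = A) (h₃ : (A * X)ᵀ = A * X) : Aᵀ * A * X = Aᵀ := by
  rw [Matrix.mul_assoc, ← h₃, ← transpose_mul, h₁]

theorem Matrix.transpose_mul_transpose_mul_eq {A : Matrix m n α} {X : Matrix n m α}
    (h₂ : X * A * X = X) (h₄ : (X * A)ᵀ = X * A) : Aᵀ * (Xᵀ * X) = X := by
  rw [← Matrix.mul_assoc, ← transpose_mul, h₄, h₂]

theorem Matrix.sum_transpose_mul_apply_eq_zero {A : Matrix m n α} (hA : ∀ k, ∑ i, A k i = 0)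
    (Y : Matrix m p α) (j : p) : ∑ i, (Aᵀ * Y) i j = 0 := by
  simp only [mul_apply, transpose_apply]
  rw [sum_comm]
  simp [← sum_mul, hA]

end

theorem sqrt_sum_sq_le_of_mul_sum_sq_le_sum_mul {ι : Type*} [Fintype ι] {s d : ι → ℝ} {ρ c : ℝ}
    (hρ : 0 < ρ) (hs : ρ * ∑ i, s i ^ 2 ≤ ∑ i, s i * d i) (hd : ∑ i, d i ^ 2 ≤ c) :
    √(∑ i, s i ^ 2) ≤ √c / ρ := by
  set N := √(∑ i, s i ^ 2)
  have hN : N ^ 2 = ∑ i, s i ^ 2 := Real.sq_sqrt (sum_nonneg fun i _ => sq_nonneg _)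
  have key : ρ * N ^ 2 ≤ N * √c := by
    rw [hN]
    exact hs.trans <| (Real.sum_mul_le_sqrt_mul_sqrt _ s d).trans <|
      mul_le_mul_of_nonneg_left (Real.sqrt_le_sqrt hd) (Real.sqrt_nonneg _)
  rw [le_div_iff₀ hρ]
  rcases (Real.sqrt_nonneg _ : 0 ≤ N).eq_or_lt with h0 | hpos
  · rw [show N = 0 from h0.symm, zero_mul]
    exact Real.sqrt_nonneg _
  · nlinarith

section Incidence

variable {V : Type*} [Fintype V] [DecidableEq V] [LinearOrder V]

lemma inc_mk_apply (W : Matrix V V ℝ) (a b k : V) :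
    inc W (a, b) k =
      if a < b then √(W a b) * ((if k = a then 1 else 0) - if k = b then 1 else 0) else 0 := by
  unfold inc
  split_ifs <;> simp_all

lemma sum_inc_apply (W : Matrix V V ℝ) (e : V × V) : ∑ k, inc W e k = 0 := by
  obtain ⟨a, b⟩ := e
  simp only [inc_mk_apply]
  split_ifs <;> simp [← mul_sum, sum_sub_distrib]

lemma sum_inc_apply_sq {W : Matrix V V ℝ} (hW : ∀ i j, 0 ≤ W i j) (a b : V) :
    ∑ k, inc W (a, b) k ^ 2 = if a < b then 2 * W a b else 0 := by
  simp only [inc_mk_apply]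
  split_ifs with hab
  · simp [mul_pow, Real.sq_sqrt (hW a b), ← mul_sum, sub_sq, sum_add_distrib, sum_sub_distrib,
      ite_pow, hab.ne']
    ring
  · simp

lemma transpose_inc_mul_inc {W : Matrix V V ℝ} (hW_symm : ∀ i j, W i j = W j i)
    (hW : ∀ i j, 0 ≤ W i j) : (inc W)ᵀ * inc W = lap W := by
  ext i j
  -- `t a b` is the contribution of the edge `{a, b}`; the full double sum counts it in both
  -- orientations, while `(inc W)ᵀ * inc W` counts it once.
  let t a b := W a b * (((if i = a then 1 else 0) - if i = b then 1 else 0) *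
    ((if j = a then 1 else 0) - if j = b then 1 else 0))
  have ht_lap : ∑ a, ∑ b, t a b = 2 * lap W i j := by
    simp only [t, lap, Matrix.sub_apply, diagonal_apply, mul_sub, mul_ite, mul_one, mul_zero,
      sum_sub_distrib, sum_ite_irrel, sum_const_zero, sum_ite_eq, mem_univ, if_true]
    rcases eq_or_ne i j with rfl | hij
    · simp only [if_true, hW_symm _ i]
      ring
    · simp [hij, hW_symm j i]
      ring
  have ht_entry : ∀ a b, inc W (a, b) i * inc W (a, b) j = if a < b then t a b else 0 := by
    intro a b
    by_cases hab : a < b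
    · simp only [inc_mk_apply, if_pos hab]
      rw [mul_mul_mul_comm, Real.mul_self_sqrt (hW a b)]
    · simp only [inc_mk_apply, if_neg hab, zero_mul]
  rw [mul_apply, Fintype.sum_prod_type]
  simp only [transpose_apply, ht_entry]
  have := sum_sum_eq_two_nsmul_sum_sum_ite_lt t (fun a b => by simp only [t, hW_symm a b]; ring)
    (fun a => by simp [t])
  rw [ht_lap, two_nsmul, ← two_mul] at this
  linarith

lemma sum_inc_apply_sq_le {W : Matrix V V ℝ} (hW : ∀ i j, 0 ≤ W i j) (e : V × V) :
    ∑ k, inc W e k ^ 2 ≤ 2 * ⨆ i, ⨆ j, |W i j| := by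
  obtain ⟨a, b⟩ := e
  have hle : |W a b| ≤ ⨆ i, ⨆ j, |W i j| :=
    le_ciSup_of_le (Finite.bddAbove_range _) a (le_ciSup_of_le (Finite.bddAbove_range _) b le_rfl)
  rw [sum_inc_apply_sq hW]
  split_ifs
  · linarith [le_abs_self (W a b)]
  · linarith [(abs_nonneg (W a b)).trans hle]

end Incidence

theorem stmt3_general {V : Type*} [Fintype V] [DecidableEq V] [LinearOrder V]
    (W : Matrix V V ℝ)
    (hsym : ∀ i j, W i j = W j i)
    (hnonneg : ∀ i j, 0 ≤ W i j)
    (Dp : Matrix V (V × V) ℝ)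
    (hp1 : inc W * Dp * inc W = inc W)
    (hp2 : Dp * inc W * Dp = Dp)
    (hp3 : (inc W * Dp)ᵀ = inc W * Dp)
    (hp4 : (Dp * inc W)ᵀ = Dp * inc W)
    (ρ : ℝ) (hρpos : 0 < ρ)
    (hρ : IsGreatest {r : ℝ | ∀ x : V → ℝ, (∑ i, x i) = 0 →
            r * (∑ i, x i ^ 2) ≤ ∑ i, x i * (lap W).mulVec x i} ρ) :
    ∀ e : V × V,
      Real.sqrt (∑ i, (Dp i e) ^ 2) ≤ Real.sqrt (2 * (⨆ i, ⨆ j, |W i j|)) / ρ := by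
  intro e
  have hLDp : lap W * Dp = (inc W)ᵀ := by
    rw [← transpose_inc_mul_inc hsym hnonneg, transpose_mul_mul_eq_transpose hp1 hp3]
  have hL_col : lap W *ᵥ (fun i => Dp i e) = inc W e :=
    funext fun k => congrFun (congrFun hLDp k) e
  have hcol_sum : ∑ i, Dp i e = 0 := by
    rw [← transpose_mul_transpose_mul_eq hp2 hp4]
    exact sum_transpose_mul_apply_eq_zero (sum_inc_apply W) _ e
  refine sqrt_sum_sq_le_of_mul_sum_sq_le_sum_mul hρpos ?_ (sum_inc_apply_sq_le hnonneg e)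
  simpa [hL_col] using hρ.1 (fun i => Dp i e) hcol_sum

/-- **Column bound for the pseudo-inverse of the incidence matrix.**
If `Dp` is the Moore–Penrose pseudo-inverse of the incidence matrix `D` (characterized by
the four Penrose conditions) and `ρ > 0` is the spectral gap of the Laplacian `L = DᵀD`
(characterized variationally as the largest constant `r` with
`r‖x‖² ≤ xᵀLx` for all `x` orthogonal to the constants), then every column `s_e` of `Dp`
satisfies `‖s_e‖₂ ≤ √(2‖W‖_∞)/ρ`, where `‖W‖_∞ = maxᵢⱼ |W_{ij}|`. -/
theorem stmt3 {V : Type*} [Fintype V] [DecidableEq V] [LinearOrder V] [Nonempty V]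
    (W : Matrix V V ℝ)
    (hsym : ∀ i j, W i j = W j i)
    (hnonneg : ∀ i j, 0 ≤ W i j)
    (hdiag : ∀ i, W i i = 0)
    (hconn : (SimpleGraph.fromRel (fun i j => W i j ≠ 0)).Connected)
    (Dp : Matrix V (V × V) ℝ)
    (hp1 : inc W * Dp * inc W = inc W)
    (hp2 : Dp * inc W * Dp = Dp)
    (hp3 : (inc W * Dp)ᵀ = inc W * Dp)
    (hp4 : (Dp * inc W)ᵀ = Dp * inc W)
    (ρ : ℝ) (hρpos : 0 < ρ)
    (hρ : IsGreatest {r : ℝ | ∀ x : V → ℝ, (∑ i, x i) = 0 →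
            r * (∑ i, x i ^ 2) ≤ ∑ i, x i * (lap W).mulVec x i} ρ) :
    ∀ e : V × V,
      Real.sqrt (∑ i, (Dp i e) ^ 2) ≤ Real.sqrt (2 * (⨆ i, ⨆ j, |W i j|)) / ρ :=
  stmt3_general W hsym hnonneg Dp hp1 hp2 hp3 hp4 ρ hρpos hρ
end

section
/- For any two graph signals u, v on a connected oriented weighted graph, Σ_{i∈V} u_i v_i ≤ (1/|V|)(Σ_{i∈V} v_i)(Σ_{j∈V} u_j) + ‖(D†)ᵀ v‖_∞ · ‖u‖_TV. -/
open Matrix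

/-!
Centre `u` at its mean: `u = (Σⱼ uⱼ / |V|) 𝟙 + D†D u`, because `D†D` is the orthogonal projection
onto `(ker D)ᗮ` and connectedness makes `ker D` the constants. Pairing with `v` gives the mean
term plus `((D†)ᵀ v) ⬝ (D u)`, which Hölder bounds by `‖(D†)ᵀ v‖_∞ ‖D u‖₁ = ‖(D†)ᵀ v‖_∞ ‖u‖_TV`.
-/

section IncidenceMatrix

variable {V : Type*} [Fintype V] [DecidableEq V] [LinearOrder V] (W : Matrix V V ℝ)

lemma inc_mulVec (z : V → ℝ) (e : V × V) :
    (inc W *ᵥ z) e = if e.1 < e.2 then √(W e.1 e.2) * (z e.1 - z e.2) else 0 := by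
  by_cases h : e.1 < e.2
  · simp [inc, mulVec, dotProduct, h, h.ne', ite_mul, Finset.sum_ite, Finset.filter_ne',
      Finset.filter_eq', sub_eq_add_neg, mul_add]
  · simp [inc, mulVec, dotProduct, h]

lemma inc_mulVec_const (c : ℝ) : inc W *ᵥ (fun _ ↦ c) = 0 := by
  ext e
  simp [inc_mulVec]

lemma sum_abs_inc_mulVec (u : V → ℝ) :
    ∑ e, |(inc W *ᵥ u) e| =
      ∑ p : V × V, if p.1 < p.2 then √(W p.1 p.2) * |u p.2 - u p.1| else 0 := by
  refine Finset.sum_congr rfl fun e _ ↦ ?_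
  rw [inc_mulVec]
  split_ifs
  · rw [abs_mul, abs_of_nonneg (Real.sqrt_nonneg _), abs_sub_comm]
  · exact abs_zero

lemma eq_of_inc_mulVec_eq_zero (hsym : ∀ i j, W i j = W j i) (hnonneg : ∀ i j, 0 ≤ W i j)
    (hconn : (SimpleGraph.fromRel (fun i j ↦ W i j ≠ 0)).Connected)
    {z : V → ℝ} (hz : inc W *ᵥ z = 0) (i j : V) : z i = z j := by
  have of_lt {a b : V} (hab : a < b) (hW : W a b ≠ 0) : z a = z b := by
    have h := congrFun hz (a, b)
    rw [inc_mulVec, if_pos hab] at h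
    have hs : √(W a b) ≠ 0 := Real.sqrt_ne_zero'.mpr ((hnonneg a b).lt_of_ne' hW)
    exact sub_eq_zero.mp ((mul_eq_zero.mp h).resolve_left hs)
  obtain ⟨p⟩ := hconn.preconnected i j
  induction p with
  | nil => rfl
  | @cons a b _ hadj _ ih =>
    obtain ⟨hne, hW⟩ := SimpleGraph.fromRel_adj _ _ _ |>.mp hadj
    have hW : W a b ≠ 0 := hW.elim id (hsym a b ▸ ·)
    refine Eq.trans ?_ ih
    rcases hne.lt_or_gt with hab | hba
    · exact of_lt hab hW
    · exact (of_lt hba (hsym a b ▸ hW)).symm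

end IncidenceMatrix

lemma dotProduct_le_iSup_abs_mul_sum_abs {ι : Type*} [Fintype ι] (a b : ι → ℝ) :
    a ⬝ᵥ b ≤ (⨆ i, |a i|) * ∑ i, |b i| := by
  rw [Finset.mul_sum]
  refine Finset.sum_le_sum fun i _ ↦ ?_
  calc a i * b i ≤ |a i| * |b i| := (le_abs_self _).trans_eq (abs_mul _ _)
    _ ≤ (⨆ i, |a i|) * |b i| :=
      mul_le_mul_of_nonneg_right (le_ciSup (f := fun i ↦ |a i|) (Set.finite_range _).bddAbove i)
        (abs_nonneg _)

lemma pinv_mul_mulVec_eq_sub_mean {E V : Type*} [Fintype E] [Fintype V]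
    (D : Matrix E V ℝ) (Dp : Matrix V E ℝ) (hp1 : D * Dp * D = D) (hp4 : (Dp * D)ᵀ = Dp * D)
    (hD1 : D *ᵥ 1 = 0) (hker : ∀ z, D *ᵥ z = 0 → ∀ i j, z i = z j) (w : V → ℝ) :
    (Dp * D) *ᵥ w = w - fun _ ↦ (∑ j, w j) / Fintype.card V := by
  set P := Dp * D
  have hsum : ∑ j, (P *ᵥ w) j = 0 := by
    rw [← one_dotProduct, dotProduct_mulVec, ← mulVec_transpose, hp4, ← mulVec_mulVec, hD1,
      mulVec_zero, zero_dotProduct]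
  have hconst : ∀ j i, (P *ᵥ w - w) j = (P *ᵥ w - w) i := by
    refine hker _ ?_
    rw [mulVec_sub, mulVec_mulVec, ← Matrix.mul_assoc, hp1, sub_self]
  ext i
  have hcard : (Fintype.card V : ℝ) ≠ 0 := by
    have : Nonempty V := ⟨i⟩
    positivity
  have hsum_sub : ∑ j, (P *ᵥ w - w) j = Fintype.card V * (P *ᵥ w - w) i := by
    rw [Finset.sum_congr rfl fun j _ ↦ hconst j i, Finset.sum_const, Finset.card_univ,
      nsmul_eq_mul]
  simp only [Pi.sub_apply, Finset.sum_sub_distrib, hsum] at hsum_sub ⊢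
  field_simp
  linarith

theorem stmt10_general {V : Type*} [Fintype V] [DecidableEq V] [LinearOrder V]
    (W : Matrix V V ℝ)
    (hsym : ∀ i j, W i j = W j i)
    (hnonneg : ∀ i j, 0 ≤ W i j)
    (hconn : (SimpleGraph.fromRel (fun i j => W i j ≠ 0)).Connected)
    (Dp : Matrix V (V × V) ℝ)
    (hp1 : inc W * Dp * inc W = inc W)
    (hp4 : (Dp * inc W)ᵀ = Dp * inc W)
    (u v : V → ℝ) :
    ∑ i, u i * v i ≤
      (1 / (Fintype.card V : ℝ)) * (∑ i, v i) * (∑ j, u j)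
        + (⨆ e : V × V, |Dpᵀ.mulVec v e|)
          * ∑ p : V × V, if p.1 < p.2 then Real.sqrt (W p.1 p.2) * |u p.2 - u p.1| else 0 := by
  have hproj := pinv_mul_mulVec_eq_sub_mean (inc W) Dp hp1 hp4 (inc_mulVec_const W 1)
    (fun _ hz ↦ eq_of_inc_mulVec_eq_zero W hsym hnonneg hconn hz) u
  have hsplit : u = (fun _ ↦ (∑ j, u j) / Fintype.card V) + Dp *ᵥ (inc W *ᵥ u) := by
    rw [mulVec_mulVec, hproj, add_sub_cancel]
  calc ∑ i, u i * v i = v ⬝ᵥ u := by simp only [dotProduct, mul_comm]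
    _ = 1 / Fintype.card V * (∑ i, v i) * (∑ j, u j) + (Dpᵀ *ᵥ v) ⬝ᵥ (inc W *ᵥ u) := by
      nth_rw 1 [hsplit]
      rw [dotProduct_add, dotProduct_mulVec, mulVec_transpose]
      simp only [dotProduct, ← Finset.sum_mul]
      ring
    _ ≤ _ := by
      grw [dotProduct_le_iSup_abs_mul_sum_abs, sum_abs_inc_mulVec]

/-- **Decomposition bound for the inner product of two graph signals (Lemma 4).**
For any two graph signals `u, v` on a connected oriented weighted graph,
`Σᵢ uᵢ vᵢ ≤ (1/|V|)(Σᵢ vᵢ)(Σⱼ uⱼ) + ‖(D†)ᵀ v‖_∞ ‖u‖_TV`,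
where `Dp = D†` is the Moore–Penrose pseudo-inverse of the incidence matrix. -/
theorem stmt10 {V : Type*} [Fintype V] [DecidableEq V] [LinearOrder V] [Nonempty V]
    (W : Matrix V V ℝ)
    (hsym : ∀ i j, W i j = W j i)
    (hnonneg : ∀ i j, 0 ≤ W i j)
    (hdiag : ∀ i, W i i = 0)
    (hconn : (SimpleGraph.fromRel (fun i j => W i j ≠ 0)).Connected)
    (Dp : Matrix V (V × V) ℝ)
    (hp1 : inc W * Dp * inc W = inc W)
    (hp2 : Dp * inc W * Dp = Dp)
    (hp3 : (inc W * Dp)ᵀ = inc W * Dp)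
    (hp4 : (Dp * inc W)ᵀ = Dp * inc W)
    (u v : V → ℝ) :
    ∑ i, u i * v i ≤
      (1 / (Fintype.card V : ℝ)) * (∑ i, v i) * (∑ j, u j)
        + (⨆ e : V × V, |Dpᵀ.mulVec v e|)
          * ∑ p : V × V, if p.1 < p.2 then Real.sqrt (W p.1 p.2) * |u p.2 - u p.1| else 0 :=
  stmt10_general W hsym hnonneg hconn Dp hp1 hp4 u v
end

section
/- If a training set M resolves a partition F with constants K, L > 0 (in the network-flow sense), then M satisfies the network compatibility condition with the same constants: L‖z‖_{∂F} ≤ K‖z‖_M + ‖z‖_{∂F-complement} for every graph signal z, where ‖z‖_M = √((1/|M|)Σ_{i∈M} z_i²). -/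
open Matrix

open scoped Classical

/-!
Test the flow `h` resolving the sign pattern `b = sign (z i - z j)` against `z`. Summing
`h(i,j) (z_i - z_j)` over the oriented edges gives, by summation by parts, `Σ_i z_i f(i)`,
which the demand bound and Cauchy–Schwarz control by `K ‖z‖_M`. Edge by edge, a boundary edge
contributes exactly `L √W_{ij} |z_j - z_i|` by the choice of `b`, and an interior edge at least
`-√W_{ij} |z_j - z_i|` by the capacity constraint.
-/

open Finset

section SummationByParts

variable {V : Type*} [Fintype V]

theorem sum_sum_mul_sub_of_antisymm (h : V → V → ℝ) (z : V → ℝ)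
    (hanti : ∀ i j, h i j = -h j i) :
    ∑ i, ∑ j, h i j * (z i - z j) = 2 * ∑ i, z i * ∑ j, h i j := by
  have hswap : ∑ i, ∑ j, h i j * z j = -∑ i, z i * ∑ j, h i j := by
    rw [sum_comm, ← sum_neg_distrib]
    refine sum_congr rfl fun j _ => ?_
    simp_rw [hanti _ j, mul_sum, ← sum_neg_distrib]
    exact sum_congr rfl fun i _ => by ring
  have hself : ∑ i, ∑ j, h i j * z i = ∑ i, z i * ∑ j, h i j := by
    simp_rw [mul_sum, mul_comm (h _ _)]
  simp_rw [mul_sub, sum_sub_distrib, hself, hswap]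
  ring

theorem two_mul_sum_lt_of_symm [LinearOrder V] (g : V × V → ℝ)
    (hsymm : ∀ p, g p.swap = g p) (hdiag : ∀ i, g (i, i) = 0) :
    2 * ∑ p : V × V, (if p.1 < p.2 then g p else 0) = ∑ p, g p := by
  have hswap : ∑ p : V × V, (if p.2 < p.1 then g p else 0)
      = ∑ p : V × V, (if p.1 < p.2 then g p else 0) := by
    rw [← (Equiv.prodComm V V).sum_comp]
    exact sum_congr rfl fun p _ => by simp [hsymm]
  have hsplit : ∀ p : V × V,
      g p = (if p.1 < p.2 then g p else 0) + (if p.2 < p.1 then g p else 0) := by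
    rintro ⟨i, j⟩
    rcases lt_trichotomy i j with hij | rfl | hij
    · simp [hij, hij.not_gt]
    · simp [hdiag]
    · simp [hij, hij.not_gt]
  rw [sum_congr rfl fun p _ => hsplit p, sum_add_distrib, hswap]
  ring

theorem sum_lt_flow_mul_sub [LinearOrder V] (h : V → V → ℝ) (z : V → ℝ)
    (hanti : ∀ i j, h i j = -h j i) :
    ∑ p : V × V, (if p.1 < p.2 then h p.1 p.2 * (z p.1 - z p.2) else 0)
      = ∑ i, z i * ∑ j, h i j := by
  have htwice := two_mul_sum_lt_of_symm (fun p => h p.1 p.2 * (z p.1 - z p.2))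
    (fun p => by simp only [Prod.fst_swap, Prod.snd_swap, hanti p.2]; ring) (fun i => by simp)
  have hfull : ∑ p : V × V, h p.1 p.2 * (z p.1 - z p.2) = 2 * ∑ i, z i * ∑ j, h i j := by
    rw [Fintype.sum_prod_type]; exact sum_sum_mul_sub_of_antisymm h z hanti
  linarith

end SummationByParts

theorem sum_abs_le_sqrt_card_mul_sum_sq {V : Type*} (s : Finset V) (z : V → ℝ) :
    ∑ i ∈ s, |z i| ≤ Real.sqrt (#s * ∑ i ∈ s, z i ^ 2) := by
  refine Real.le_sqrt_of_sq_le ?_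
  simpa only [sq_abs] using sq_sum_le_card_mul_sum_sq (s := s) (f := fun i => |z i|)

theorem div_mul_sqrt_mul_eq {n : ℝ} (hn : 0 ≤ n) (a x : ℝ) :
    a / n * Real.sqrt (n * x) = a * Real.sqrt (1 / n * x) := by
  rcases hn.eq_or_lt with rfl | hn
  · simp
  · rw [show n * x = n ^ 2 * (1 / n * x) by field_simp, Real.sqrt_mul (sq_nonneg n),
      Real.sqrt_sq hn.le]
    field_simp

theorem sum_mul_demand_le {V : Type*} [Fintype V] (M : Finset V) (z f : V → ℝ) {C : ℝ}
    (hC : 0 ≤ C) (hM : ∀ i ∈ M, |f i| ≤ C) (hoff : ∀ i ∉ M, f i = 0) :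
    ∑ i, z i * f i ≤ C * Real.sqrt (#M * ∑ i ∈ M, z i ^ 2) :=
  calc ∑ i, z i * f i = ∑ i ∈ M, z i * f i :=
        (sum_subset (subset_univ M) fun i _ hi => by rw [hoff i hi, mul_zero]).symm
    _ ≤ ∑ i ∈ M, C * |z i| := sum_le_sum fun i hi =>
        calc z i * f i ≤ |z i| * |f i| := (le_abs_self _).trans (abs_mul _ _).le
          _ ≤ C * |z i| := by
            rw [mul_comm C]; exact mul_le_mul_of_nonneg_left (hM i hi) (abs_nonneg _)
    _ ≤ C * Real.sqrt (#M * ∑ i ∈ M, z i ^ 2) := by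
        rw [← mul_sum]
        exact mul_le_mul_of_nonneg_left (sum_abs_le_sqrt_card_mul_sum_sq M z) hC

section Edges

variable {V ι : Type*}

noncomputable def edgeSign (z : V → ℝ) (p : V × V) : ℝ := if z p.2 ≤ z p.1 then 1 else -1

theorem edgeSign_eq_one_or_neg_one (z : V → ℝ) (p : V × V) :
    edgeSign z p = 1 ∨ edgeSign z p = -1 := by
  unfold edgeSign; split_ifs <;> simp

theorem edgeSign_mul_sub (z : V → ℝ) (p : V × V) :
    edgeSign z p * (z p.1 - z p.2) = |z p.2 - z p.1| := by
  unfold edgeSign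
  split_ifs with hp
  · rw [abs_sub_comm, abs_of_nonneg (sub_nonneg.mpr hp), one_mul]
  · rw [abs_of_pos (sub_pos.mpr (not_le.mp hp))]; ring

theorem boundary_sub_interior_le_flow [LinearOrder V] (W : V → V → ℝ) (c : V → ι)
    (z : V → ℝ) (h : V → V → ℝ) (L : ℝ)
    (hcap : ∀ i j, i < j → c i = c j → |h i j| ≤ Real.sqrt (W i j))
    (hbdry : ∀ i j, i < j → c i ≠ c j → h i j = edgeSign z (i, j) * L * Real.sqrt (W i j))
    (p : V × V) :
    L * (if p.1 < p.2 ∧ c p.1 ≠ c p.2 then Real.sqrt (W p.1 p.2) * |z p.2 - z p.1| else 0)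
      - (if p.1 < p.2 ∧ c p.1 = c p.2 then Real.sqrt (W p.1 p.2) * |z p.2 - z p.1| else 0)
      ≤ if p.1 < p.2 then h p.1 p.2 * (z p.1 - z p.2) else 0 := by
  obtain ⟨i, j⟩ := p
  by_cases hij : i < j
  · by_cases hc : c i = c j
    · have hflow : |h i j * (z i - z j)| ≤ Real.sqrt (W i j) * |z j - z i| := by
        rw [abs_mul, abs_sub_comm]
        exact mul_le_mul_of_nonneg_right (hcap i j hij hc) (abs_nonneg _)
      simp only [hij, hc, true_and, ne_eq, not_true_eq_false, if_false, if_true]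
      linarith [neg_abs_le (h i j * (z i - z j))]
    · have hedge : h i j * (z i - z j) = L * (Real.sqrt (W i j) * |z j - z i|) := by
        rw [hbdry i j hij hc, ← edgeSign_mul_sub z (i, j)]; ring
      simp only [hij, hc, true_and, ne_eq, not_false_eq_true, if_false, if_true, hedge]
      linarith
  · simp [hij]

end Edges

theorem stmt11_general {V : Type*} [Fintype V] [LinearOrder V]
    {ι : Type*} (W : Matrix V V ℝ)
    (c : V → ι) (M : Finset V)
    (K L : ℝ) (hK : 0 < K)
    (hres : ∀ b : V × V → ℝ, (∀ p : V × V, b p = 1 ∨ b p = -1) →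
      ∃ h : V → V → ℝ,
        (∀ i j, h i j = - h j i) ∧
        (∀ i j, W i j = 0 → h i j = 0) ∧
        (∀ i j, i < j → c i = c j → |h i j| ≤ Real.sqrt (W i j)) ∧
        (∀ i j, i < j → c i ≠ c j → h i j = b (i, j) * L * Real.sqrt (W i j)) ∧
        (∀ i ∈ M, |∑ j, h i j| ≤ K / (M.card : ℝ)) ∧
        (∀ i ∉ M, (∑ j, h i j) = 0)) :
    ∀ z : V → ℝ,
      L * (∑ p : V × V, if p.1 < p.2 ∧ c p.1 ≠ c p.2 then
            Real.sqrt (W p.1 p.2) * |z p.2 - z p.1| else 0)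
        ≤ K * Real.sqrt ((1 / (M.card : ℝ)) * ∑ i ∈ M, (z i) ^ 2)
          + (∑ p : V × V, if p.1 < p.2 ∧ c p.1 = c p.2 then
              Real.sqrt (W p.1 p.2) * |z p.2 - z p.1| else 0) := by
  intro z
  obtain ⟨h, hanti, -, hcap, hbdry, hdem, hfree⟩ :=
    hres (edgeSign z) (edgeSign_eq_one_or_neg_one z)
  have hedges := sum_le_sum fun p (_ : p ∈ univ) =>
    boundary_sub_interior_le_flow W c z h L hcap hbdry p
  rw [sum_sub_distrib, ← mul_sum, sum_lt_flow_mul_sub h z hanti] at hedges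
  have hdemand := sum_mul_demand_le M z (fun i => ∑ j, h i j)
    (div_nonneg hK.le (Nat.cast_nonneg _)) hdem hfree
  rw [div_mul_sqrt_mul_eq (Nat.cast_nonneg _)] at hdemand
  linarith

/-- **Resolving training sets satisfy the network compatibility condition (Lemma 1).**
Consider a weighted graph with node partition encoded by a labelling `c : V → ι`
(boundary edges `∂F` are those joining differently-labelled nodes). Suppose the training
set `M` resolves the partition with constants `K, L > 0`: for every sign pattern `b` on
the edges there is a flow `h` (antisymmetric, supported on edges, with prescribed demands
of size at most `K/|M|` at training nodes and `0` elsewhere) obeying the capacity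
constraint `|h(i,j)| ≤ √W_{ij}` on intra-cluster edges and `h(i,j) = b_{ij} L √W_{ij}` on
boundary edges. Then for every graph signal `z`:
`L ‖z‖_{∂F} ≤ K ‖z‖_M + ‖z‖_{∂F-complement}`, with `‖z‖_M = √((1/|M|) Σ_{i∈M} z_i²)`. -/
theorem stmt11 {V : Type*} [Fintype V] [DecidableEq V] [LinearOrder V]
    {ι : Type*} (W : Matrix V V ℝ)
    (hsym : ∀ i j, W i j = W j i)
    (hnonneg : ∀ i j, 0 ≤ W i j)
    (hdiag : ∀ i, W i i = 0)
    (c : V → ι) (M : Finset V) (hM : M.Nonempty)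
    (K L : ℝ) (hK : 0 < K) (hL : 0 < L)
    (hres : ∀ b : V × V → ℝ, (∀ p : V × V, b p = 1 ∨ b p = -1) →
      ∃ h : V → V → ℝ,
        (∀ i j, h i j = - h j i) ∧
        (∀ i j, W i j = 0 → h i j = 0) ∧
        (∀ i j, i < j → c i = c j → |h i j| ≤ Real.sqrt (W i j)) ∧
        (∀ i j, i < j → c i ≠ c j → h i j = b (i, j) * L * Real.sqrt (W i j)) ∧
        (∀ i ∈ M, |∑ j, h i j| ≤ K / (M.card : ℝ)) ∧
        (∀ i ∉ M, (∑ j, h i j) = 0)) :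
    ∀ z : V → ℝ,
      L * (∑ p : V × V, if p.1 < p.2 ∧ c p.1 ≠ c p.2 then
            Real.sqrt (W p.1 p.2) * |z p.2 - z p.1| else 0)
        ≤ K * Real.sqrt ((1 / (M.card : ℝ)) * ∑ i ∈ M, (z i) ^ 2)
          + (∑ p : V × V, if p.1 < p.2 ∧ c p.1 = c p.2 then
              Real.sqrt (W p.1 p.2) * |z p.2 - z p.1| else 0) :=
  stmt11_general W c M K L hK hres
end

section
/- Let a graph be partitioned into clusters C_1,…,C_k whose induced subgraphs are connected. Then for any two graph signals u, v: Σ_{i∈V} v_i u_i ≤ (max_l |(1/|C_l|)Σ_{i∈C_l} v_i|)·Σ_{j∈V}|u_j| + (max_l ‖(D_{C_l}†)ᵀ v_{C_l}‖_∞)·‖u‖_TV, where D_{C_l} is the incidence matrix of the subgraph induced by C_l. -/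
/-!
On a single connected graph, `P = D† D` is the orthogonal projection onto the row space of `D`,
whose complement `ker D` consists of the constant signals. Hence `u = P u + mean(u)`, and
`⟨v, P u⟩ = ⟨(D†)ᵀ v, D u⟩ ≤ ‖(D†)ᵀ v‖_∞ ‖D u‖₁ = ‖(D†)ᵀ v‖_∞ ‖u‖_TV`. Applying this bound on every
cluster and summing, the cluster TV seminorms add up to at most the TV seminorm of the whole
graph, because the induced subgraphs use disjoint sets of edges.
-/

open Matrix

/-- Weighted total variation (edges are ordered pairs `i < j`). -/
noncomputable def tv {V : Type*} [Fintype V] [LinearOrder V]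
    (W : Matrix V V ℝ) (x : V → ℝ) : ℝ :=
  ∑ p : V × V, if p.1 < p.2 then Real.sqrt (W p.1 p.2) * |x p.2 - x p.1| else 0

lemma dotProduct_le_iSup_abs_mul_sum_abs_s19 {E : Type*} [Fintype E] (x y : E → ℝ) :
    x ⬝ᵥ y ≤ (⨆ e, |x e|) * ∑ e, |y e| := by
  rw [Finset.mul_sum]
  refine Finset.sum_le_sum fun e _ => ?_
  calc x e * y e ≤ |x e| * |y e| := by rw [← abs_mul]; exact le_abs_self _
    _ ≤ (⨆ e, |x e|) * |y e| :=
      mul_le_mul_of_nonneg_right (le_ciSup (Finite.bddAbove_range fun e => |x e|) e)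
        (abs_nonneg _)

lemma sum_le_iSup_mul_sum_add_iSup_mul_sum {ι : Type*} [Fintype ι] {s a x b y : ι → ℝ}
    (hx : ∀ l, 0 ≤ x l) (hy : ∀ l, 0 ≤ y l) (h : ∀ l, s l ≤ a l * x l + b l * y l) :
    ∑ l, s l ≤ (⨆ l, a l) * ∑ l, x l + (⨆ l, b l) * ∑ l, y l := by
  rw [Finset.mul_sum, Finset.mul_sum, ← Finset.sum_add_distrib]
  exact Finset.sum_le_sum fun l _ => (h l).trans <| add_le_add
    (mul_le_mul_of_nonneg_right (le_ciSup (Finite.bddAbove_range a) l) (hx l))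
    (mul_le_mul_of_nonneg_right (le_ciSup (Finite.bddAbove_range b) l) (hy l))

lemma dotProduct_eq_mean_add_of_ker_eq_const {S E : Type*} [Fintype S] [Nonempty S] [Fintype E]
    (D : Matrix E S ℝ) (Dp : Matrix S E ℝ) (hp1 : D * Dp * D = D) (hp4 : (Dp * D)ᵀ = Dp * D)
    (hker : ∀ x, D *ᵥ x = 0 ↔ ∀ i j, x i = x j) (u v : S → ℝ) :
    v ⬝ᵥ u = 1 / (Fintype.card S : ℝ) * (∑ i, v i) * (∑ i, u i) + Dpᵀ *ᵥ v ⬝ᵥ D *ᵥ u := by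
  set P := Dp * D
  have hconst : ∀ i j, (u - P *ᵥ u) i = (u - P *ᵥ u) j := by
    rw [← hker, mulVec_sub, mulVec_mulVec, ← Matrix.mul_assoc, hp1, sub_self]
  have hsum_P : ∑ i, (P *ᵥ u) i = 0 := by
    have hP_one : P *ᵥ (fun _ => 1) = 0 := by
      rw [← mulVec_mulVec, (hker _).2 fun _ _ => rfl, mulVec_zero]
    calc ∑ i, (P *ᵥ u) i = (fun _ => 1) ⬝ᵥ P *ᵥ u := by simp [dotProduct]
      _ = 0 := by rw [dotProduct_mulVec, ← mulVec_transpose, hp4, hP_one, zero_dotProduct]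
  obtain ⟨i₀⟩ := ‹Nonempty S›
  set a := (u - P *ᵥ u) i₀
  have hu : u = P *ᵥ u + fun _ => a := by
    funext i
    have h := hconst i i₀
    simp only [Pi.sub_apply] at h
    simp only [Pi.add_apply, Pi.sub_apply, a]
    linarith
  have ha : a = 1 / (Fintype.card S : ℝ) * ∑ i, u i := by
    have hn : (Fintype.card S : ℝ) ≠ 0 := Nat.cast_ne_zero.2 Fintype.card_ne_zero
    conv_rhs => rw [hu]
    simp [Finset.sum_add_distrib, hsum_P, hn]
  calc v ⬝ᵥ u = v ⬝ᵥ P *ᵥ u + (∑ i, v i) * a := by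
        conv_lhs => rw [hu]
        rw [dotProduct_add]
        simp [dotProduct, Finset.sum_mul]
    _ = _ := by
        rw [← mulVec_mulVec, dotProduct_mulVec, ← mulVec_transpose, dotProduct_comm, ha]
        ring

section IncidenceMatrix

variable {S : Type*} [Fintype S] [DecidableEq S] [LinearOrder S]

lemma inc_mulVec_apply (W : Matrix S S ℝ) (x : S → ℝ) (e : S × S) :
    (inc W *ᵥ x) e = if e.1 < e.2 then √(W e.1 e.2) * (x e.1 - x e.2) else 0 := by
  obtain ⟨i, j⟩ := e
  by_cases hij : i < j
  · have hji : j ≠ i := hij.ne'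
    simp only [mulVec, dotProduct, inc, if_pos hij, ite_mul, zero_mul, neg_mul]
    rw [Fintype.sum_eq_add i j (by simpa using hji.symm) (fun k hk => by simp [hk.1, hk.2])]
    simp [hji]
    ring
  · simp [mulVec, dotProduct, inc, hij]

lemma sum_abs_inc_mulVec_s19 (W : Matrix S S ℝ) (u : S → ℝ) :
    ∑ e, |(inc W *ᵥ u) e| = tv W u := by
  refine Finset.sum_congr rfl fun e _ => ?_
  rw [inc_mulVec_apply]
  split_ifs
  · rw [abs_mul, abs_of_nonneg (Real.sqrt_nonneg _), abs_sub_comm]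
  · exact abs_zero

lemma tv_nonneg (W : Matrix S S ℝ) (u : S → ℝ) : 0 ≤ tv W u :=
  sum_abs_inc_mulVec_s19 W u ▸ Finset.sum_nonneg fun _ _ => abs_nonneg _

lemma inc_mulVec_eq_zero_iff (W : Matrix S S ℝ) (hsym : ∀ i j, W i j = W j i)
    (hnonneg : ∀ i j, 0 ≤ W i j)
    (hconn : (SimpleGraph.fromRel fun i j : S => W i j ≠ 0).Connected) (x : S → ℝ) :
    inc W *ᵥ x = 0 ↔ ∀ i j, x i = x j := by
  constructor
  · intro hx
    have hedge : ∀ i j, i < j → W i j ≠ 0 → x i = x j := by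
      intro i j hij hW
      have h := congrFun hx (i, j)
      rw [inc_mulVec_apply, if_pos hij] at h
      have hsqrt : √(W i j) ≠ 0 := (Real.sqrt_pos.2 ((hnonneg i j).lt_of_ne' hW)).ne'
      exact sub_eq_zero.1 ((mul_eq_zero.1 h).resolve_left hsqrt)
    have hadj : ∀ i j, (SimpleGraph.fromRel fun i j : S => W i j ≠ 0).Adj i j → x i = x j := by
      rintro i j ⟨hne, hW⟩
      have hW : W i j ≠ 0 := hW.elim id fun h => hsym i j ▸ h
      rcases hne.lt_or_gt with hij | hji
      · exact hedge i j hij hW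
      · exact (hedge j i hji (hsym i j ▸ hW)).symm
    intro i j
    obtain ⟨w⟩ := hconn.preconnected i j
    induction w with
    | nil => rfl
    | cons h _ ih => exact (hadj _ _ h).trans ih
  · intro hx
    funext e
    rw [inc_mulVec_apply, hx e.1 e.2, sub_self, mul_zero, ite_self, Pi.zero_apply]

theorem sum_mul_le_mean_mul_sum_add_tv [Nonempty S] (W : Matrix S S ℝ)
    (hsym : ∀ i j, W i j = W j i) (hnonneg : ∀ i j, 0 ≤ W i j)
    (hconn : (SimpleGraph.fromRel fun i j : S => W i j ≠ 0).Connected)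
    (Dp : Matrix S (S × S) ℝ) (hp1 : inc W * Dp * inc W = inc W)
    (hp4 : (Dp * inc W)ᵀ = Dp * inc W) (u v : S → ℝ) :
    ∑ i, v i * u i ≤
      1 / (Fintype.card S : ℝ) * (∑ i, v i) * (∑ i, u i)
        + (⨆ e, |(Dpᵀ *ᵥ v) e|) * tv W u := by
  rw [← sum_abs_inc_mulVec_s19]
  exact (dotProduct_eq_mean_add_of_ker_eq_const _ Dp hp1 hp4
    (inc_mulVec_eq_zero_iff W hsym hnonneg hconn) u v).trans_le
    (add_le_add_right (dotProduct_le_iSup_abs_mul_sum_abs_s19 _ _) _)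

theorem sum_mul_le_abs_mean_mul_sum_abs_add_tv [Nonempty S] (W : Matrix S S ℝ)
    (hsym : ∀ i j, W i j = W j i) (hnonneg : ∀ i j, 0 ≤ W i j)
    (hconn : (SimpleGraph.fromRel fun i j : S => W i j ≠ 0).Connected)
    (Dp : Matrix S (S × S) ℝ) (hp1 : inc W * Dp * inc W = inc W)
    (hp4 : (Dp * inc W)ᵀ = Dp * inc W) (u v : S → ℝ) :
    ∑ i, v i * u i ≤
      |1 / (Fintype.card S : ℝ) * ∑ i, v i| * ∑ i, |u i|
        + (⨆ e, |(Dpᵀ *ᵥ v) e|) * tv W u := by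
  refine (sum_mul_le_mean_mul_sum_add_tv W hsym hnonneg hconn Dp hp1 hp4 u v).trans ?_
  gcongr ?_ + _
  calc 1 / (Fintype.card S : ℝ) * (∑ i, v i) * (∑ i, u i)
      ≤ |1 / (Fintype.card S : ℝ) * ∑ i, v i| * |∑ i, u i| := by
        rw [← abs_mul]; exact le_abs_self _
    _ ≤ |1 / (Fintype.card S : ℝ) * ∑ i, v i| * ∑ i, |u i| := by
        gcongr; exact Finset.abs_sum_le_sum_abs _ _

end IncidenceMatrix

lemma sum_tv_fiber_le {V ι : Type*} [Fintype V] [LinearOrder V]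
    [Fintype ι] [DecidableEq ι] (W : Matrix V V ℝ) (c : V → ι) (u : V → ℝ) :
    ∑ l, tv (Matrix.of fun i j : {i // c i = l} => W i.1 j.1) (fun i => u i.1) ≤ tv W u := by
  set g : V × V → ℝ := fun p => if p.1 < p.2 then √(W p.1 p.2) * |u p.2 - u p.1| else 0
  have hg : ∀ p, 0 ≤ g p := fun p => by dsimp only [g]; split_ifs <;> positivity
  have hfiber : ∀ l, tv (Matrix.of fun i j : {i // c i = l} => W i.1 j.1) (fun i => u i.1)
      = ∑ p with c p.1 = l ∧ c p.2 = l, g p := by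
    intro l
    rw [Finset.sum_subtype (p := fun p : V × V => c p.1 = l ∧ c p.2 = l) _ (fun p => by simp)]
    exact Fintype.sum_equiv Equiv.subtypeProdEquivProd.symm _ _ fun p => rfl
  calc ∑ l, tv (Matrix.of fun i j : {i // c i = l} => W i.1 j.1) (fun i => u i.1)
      = ∑ l, ∑ p with c p.1 = l ∧ c p.2 = l, g p := Finset.sum_congr rfl fun l _ => hfiber l
    _ ≤ ∑ l, ∑ p with c p.1 = l, g p := by
        refine Finset.sum_le_sum fun l _ => Finset.sum_le_sum_of_subset_of_nonneg ?_ ?_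
        · intro p; simp +contextual
        · exact fun p _ _ => hg p
    _ = tv W u := Finset.sum_fiberwise _ _ g

theorem stmt19_general {V : Type*} [Fintype V] [DecidableEq V] [LinearOrder V]
    {ι : Type*} [Fintype ι] [DecidableEq ι]
    (W : Matrix V V ℝ)
    (hsym : ∀ i j, W i j = W j i)
    (hnonneg : ∀ i j, 0 ≤ W i j)
    (c : V → ι)
    (hconn : ∀ l : ι, (SimpleGraph.fromRel
      (fun i j : {i // c i = l} => W i.1 j.1 ≠ 0)).Connected)
    (Dp : ∀ l : ι, Matrix {i // c i = l} ({i // c i = l} × {i // c i = l}) ℝ)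
    (hp1 : ∀ l, inc (Matrix.of fun i j : {i // c i = l} => W i.1 j.1) * Dp l *
            inc (Matrix.of fun i j : {i // c i = l} => W i.1 j.1)
          = inc (Matrix.of fun i j : {i // c i = l} => W i.1 j.1))
    (hp4 : ∀ l, (Dp l * inc (Matrix.of fun i j : {i // c i = l} => W i.1 j.1))ᵀ
          = Dp l * inc (Matrix.of fun i j : {i // c i = l} => W i.1 j.1))
    (u v : V → ℝ) :
    ∑ i, v i * u i ≤
      (⨆ l : ι, |(1 / (Fintype.card {i // c i = l} : ℝ)) * ∑ i : {i // c i = l}, v i.1|)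
          * (∑ j, |u j|)
        + (⨆ l : ι, ⨆ e : {i // c i = l} × {i // c i = l},
            |(Dp l)ᵀ.mulVec (fun i : {i // c i = l} => v i.1) e|) * tv W u := by
  have hcluster := fun l => have := (hconn l).nonempty
    sum_mul_le_abs_mean_mul_sum_abs_add_tv (Matrix.of fun i j : {i // c i = l} => W i j)
      (fun _ _ => hsym _ _) (fun _ _ => hnonneg _ _) (hconn l) (Dp l) (hp1 l) (hp4 l)
      (fun i => u i) (fun i => v i)
  calc ∑ i, v i * u i = ∑ l, ∑ i : {i // c i = l}, v i * u i := (Fintype.sum_fiberwise c _).symm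
    _ ≤ _ := sum_le_iSup_mul_sum_add_iSup_mul_sum
          (fun l => Finset.sum_nonneg fun _ _ => abs_nonneg _) (fun l => tv_nonneg _ _) hcluster
    _ ≤ _ := by
        rw [Fintype.sum_fiberwise c fun j => |u j|]
        gcongr
        · exact Real.iSup_nonneg fun _ => Real.iSup_nonneg fun _ => abs_nonneg _
        · exact sum_tv_fiber_le W c u

/-- **Cluster-wise decomposition bound (Corollary 1).**
Let the nodes be partitioned into clusters `C_l = {i : c i = l}` whose induced subgraphs
are connected, with oriented incidence matrices `D_{C_l}` and Moore–Penrose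
pseudo-inverses `Dp l`. Then for any two graph signals `u, v`:
`Σ_{i∈V} vᵢ uᵢ ≤ (max_l |(1/|C_l|) Σ_{i∈C_l} vᵢ|) Σ_{j∈V}|uⱼ|
  + (max_l ‖(D_{C_l}†)ᵀ v_{C_l}‖_∞) ‖u‖_TV`. -/
theorem stmt19 {V : Type*} [Fintype V] [DecidableEq V] [LinearOrder V]
    {ι : Type*} [Fintype ι] [DecidableEq ι] [Nonempty ι]
    (W : Matrix V V ℝ)
    (hsym : ∀ i j, W i j = W j i)
    (hnonneg : ∀ i j, 0 ≤ W i j)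
    (hdiag : ∀ i, W i i = 0)
    (c : V → ι) (hc : Function.Surjective c)
    (hconn : ∀ l : ι, (SimpleGraph.fromRel
      (fun i j : {i // c i = l} => W i.1 j.1 ≠ 0)).Connected)
    (Dp : ∀ l : ι, Matrix {i // c i = l} ({i // c i = l} × {i // c i = l}) ℝ)
    (hp1 : ∀ l, inc (Matrix.of fun i j : {i // c i = l} => W i.1 j.1) * Dp l *
            inc (Matrix.of fun i j : {i // c i = l} => W i.1 j.1)
          = inc (Matrix.of fun i j : {i // c i = l} => W i.1 j.1))
    (hp2 : ∀ l, Dp l * inc (Matrix.of fun i j : {i // c i = l} => W i.1 j.1) * Dp l = Dp l)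
    (hp3 : ∀ l, (inc (Matrix.of fun i j : {i // c i = l} => W i.1 j.1) * Dp l)ᵀ
          = inc (Matrix.of fun i j : {i // c i = l} => W i.1 j.1) * Dp l)
    (hp4 : ∀ l, (Dp l * inc (Matrix.of fun i j : {i // c i = l} => W i.1 j.1))ᵀ
          = Dp l * inc (Matrix.of fun i j : {i // c i = l} => W i.1 j.1))
    (u v : V → ℝ) :
    ∑ i, v i * u i ≤
      (⨆ l : ι, |(1 / (Fintype.card {i // c i = l} : ℝ)) * ∑ i : {i // c i = l}, v i.1|)
          * (∑ j, |u j|)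
        + (⨆ l : ι, ⨆ e : {i // c i = l} × {i // c i = l},
            |(Dp l)ᵀ.mulVec (fun i : {i // c i = l} => v i.1) e|) * tv W u :=
  stmt19_general W hsym hnonneg c hconn Dp hp1 hp4 u v
end
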